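/- Let U and W be finite-dimensional complex vector spaces, α ∈ U and β ∈ W nonzero, and a, b ≥ 0. If ω₁ ∈ Λ^a U ⊗ Λ^{b+1} W and ω₂ ∈ Λ^{a+1} U ⊗ Λ^b W satisfy L_α ω₁ = L_β ω₂, then there exist η₁ ∈ Λ^{a−1} U ⊗ Λ^{b+1} W, η₂ ∈ Λ^a U ⊗ Λ^b W and η₃ ∈ Λ^{a+1} U ⊗ Λ^{b−1} W with ω₁ = L_α η₁ + L_β η₂ and ω₂ = L_α η₂ + L_β η₃. (Exactness of the symbol complex of the Schweitzer complex in the degree just below the Aeppli degree.) -/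

import Mathlib

open scoped TensorProduct

variable {U W : Type} [AddCommGroup U] [Module ℂ U] [AddCommGroup W] [Module ℂ W]

/-- Left wedge multiplication `L_α = α ∧ -` on exterior powers. -/
noncomputable def Lmul (α : U) (a : ℕ) : ⋀[ℂ]^a U →ₗ[ℂ] ⋀[ℂ]^(a + 1) U :=
  (LinearMap.mulLeft ℂ (ExteriorAlgebra.ι ℂ α)).restrict fun x hx => by
    have h1 : ExteriorAlgebra.ι ℂ α ∈ ⋀[ℂ]^1 U := by
      show ExteriorAlgebra.ι ℂ α ∈ LinearMap.range (ExteriorAlgebra.ι ℂ (M := U)) ^ 1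
      rw [pow_one]; exact LinearMap.mem_range_self _ α
    exact (Nat.add_comm 1 a) ▸ SetLike.mul_mem_graded h1 hx

lemma Lmul_Lmul (α : U) (a : ℕ) (x : ⋀[ℂ]^a U) :
    Lmul α (a + 1) (Lmul α a x) = 0 := by
  apply Subtype.ext
  show ExteriorAlgebra.ι ℂ α * (ExteriorAlgebra.ι ℂ α * (x : ExteriorAlgebra ℂ U)) = 0
  rw [← mul_assoc, ExteriorAlgebra.ι_sq_zero, zero_mul]

/-- `BX U W r s = Λ^r U ⊗ Λ^s W` for `r, s ≥ 0`, and the zero space otherwise. -/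
noncomputable def BX (U W : Type) [AddCommGroup U] [Module ℂ U] [AddCommGroup W] [Module ℂ W] :
    ℤ → ℤ → Type
  | Int.ofNat a, Int.ofNat b => ⋀[ℂ]^a U ⊗[ℂ] ⋀[ℂ]^b W
  | Int.ofNat _, Int.negSucc _ => PUnit
  | Int.negSucc _, _ => PUnit

noncomputable instance : ∀ r s, AddCommGroup (BX U W r s)
  | Int.ofNat a, Int.ofNat b => inferInstanceAs (AddCommGroup (⋀[ℂ]^a U ⊗[ℂ] ⋀[ℂ]^b W))
  | Int.ofNat _, Int.negSucc _ => inferInstanceAs (AddCommGroup PUnit)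
  | Int.negSucc _, Int.ofNat _ => inferInstanceAs (AddCommGroup PUnit)
  | Int.negSucc _, Int.negSucc _ => inferInstanceAs (AddCommGroup PUnit)

noncomputable instance : ∀ r s, Module ℂ (BX U W r s)
  | Int.ofNat a, Int.ofNat b => inferInstanceAs (Module ℂ (⋀[ℂ]^a U ⊗[ℂ] ⋀[ℂ]^b W))
  | Int.ofNat _, Int.negSucc _ => inferInstanceAs (Module ℂ PUnit)
  | Int.negSucc _, Int.ofNat _ => inferInstanceAs (Module ℂ PUnit)
  | Int.negSucc _, Int.negSucc _ => inferInstanceAs (Module ℂ PUnit)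

/-- The operator `L_α = (α ∧ -) ⊗ id` on `BX U W`. -/
noncomputable def Bd1 (α : U) : ∀ r s, BX U W r s →ₗ[ℂ] BX U W (r + 1) s
  | Int.ofNat a, Int.ofNat b => TensorProduct.map (Lmul α a) (LinearMap.id (M := ⋀[ℂ]^b W))
  | Int.ofNat _, Int.negSucc _ => 0
  | Int.negSucc _, _ => 0

/-- The operator `L_β = id ⊗ (β ∧ -)` on `BX U W`. -/
noncomputable def Bd2u (β : W) : ∀ r s, BX U W r s →ₗ[ℂ] BX U W r (s + 1)
  | Int.ofNat a, Int.ofNat b => TensorProduct.map (LinearMap.id (M := ⋀[ℂ]^a U)) (Lmul β b)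
  | Int.ofNat _, Int.negSucc _ => 0
  | Int.negSucc _, _ => 0

/-- The signed operator `(-1)^r L_β = (-1)^r (id ⊗ (β ∧ -))` on `BX U W`. -/
noncomputable def Bd2s (β : W) : ∀ r s, BX U W r s →ₗ[ℂ] BX U W r (s + 1)
  | Int.ofNat a, Int.ofNat b =>
      ((-1 : ℂ) ^ a) • TensorProduct.map (LinearMap.id (M := ⋀[ℂ]^a U)) (Lmul β b)
  | Int.ofNat _, Int.negSucc _ => 0
  | Int.negSucc _, _ => 0

/-- Transport of `BX` along equalities of the indices. -/
noncomputable def BXcast {r s r' s' : ℤ} (h1 : r = r') (h2 : s = s') :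
    BX U W r s ≃ₗ[ℂ] BX U W r' s' := by
  subst h1; subst h2; exact LinearEquiv.refl ℂ _

/-!
Pick `φ` with `φ α = 1`. Interior multiplication `ι_φ` is a contracting homotopy for `α ∧ -`:
`α ∧ ι_φ x + ι_φ (α ∧ x) = x`, and likewise for `β`. Tensoring with the other factor,
`η₁ := ι_φ ω₁` and `η₂ := ι_φ ω₂` solve the first equation; the defect `ω₂ - L_α η₂` is then
killed by `L_β`, so the homotopy for `β` writes it as `L_β η₃`.
-/

section TensorHomotopy

variable {R M₀ M₁ M₂ N₀ N₁ N₂ : Type*} [CommRing R]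
  [AddCommGroup M₀] [Module R M₀] [AddCommGroup M₁] [Module R M₁] [AddCommGroup M₂] [Module R M₂]
  [AddCommGroup N₀] [Module R N₀] [AddCommGroup N₁] [Module R N₁] [AddCommGroup N₂] [Module R N₂]

lemma LinearMap.rTensor_lTensor_comm (f : M₁ →ₗ[R] M₂) (g : N₁ →ₗ[R] N₂) (x : M₁ ⊗[R] N₁) :
    f.rTensor N₂ (g.lTensor M₁ x) = g.lTensor M₂ (f.rTensor N₁ x) := by
  rw [← LinearMap.comp_apply, LinearMap.rTensor_comp_lTensor, ← LinearMap.lTensor_comp_rTensor,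
    LinearMap.comp_apply]

lemma LinearMap.rTensor_homotopy_apply {f₀ : M₀ →ₗ[R] M₁} {f₁ : M₁ →ₗ[R] M₂}
    {h₁ : M₁ →ₗ[R] M₀} {h₂ : M₂ →ₗ[R] M₁} (hfh : f₀ ∘ₗ h₁ + h₂ ∘ₗ f₁ = LinearMap.id)
    (x : M₁ ⊗[R] N₀) :
    x = f₀.rTensor N₀ (h₁.rTensor N₀ x) + h₂.rTensor N₀ (f₁.rTensor N₀ x) := by
  simpa only [LinearMap.rTensor_add, LinearMap.rTensor_comp_apply, LinearMap.rTensor_id,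
    LinearMap.id_apply, LinearMap.add_apply] using (congr(LinearMap.rTensor N₀ $hfh x)).symm

lemma LinearMap.lTensor_homotopy_apply {g₀ : N₀ →ₗ[R] N₁} {g₁ : N₁ →ₗ[R] N₂}
    {k₁ : N₁ →ₗ[R] N₀} {k₂ : N₂ →ₗ[R] N₁} (hgk : g₀ ∘ₗ k₁ + k₂ ∘ₗ g₁ = LinearMap.id)
    (x : M₀ ⊗[R] N₁) :
    x = g₀.lTensor M₀ (k₁.lTensor M₀ x) + k₂.lTensor M₀ (g₁.lTensor M₀ x) := by
  simpa only [LinearMap.lTensor_add, LinearMap.lTensor_comp_apply, LinearMap.lTensor_id,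
    LinearMap.id_apply, LinearMap.add_apply] using (congr(LinearMap.lTensor M₀ $hgk x)).symm

theorem exists_eq_rTensor_add_lTensor_of_homotopy {f₀ : M₀ →ₗ[R] M₁} {f₁ : M₁ →ₗ[R] M₂}
    {h₁ : M₁ →ₗ[R] M₀} {h₂ : M₂ →ₗ[R] M₁} (hf : f₁ ∘ₗ f₀ = 0)
    (hfh : f₀ ∘ₗ h₁ + h₂ ∘ₗ f₁ = LinearMap.id) {g₀ : N₀ →ₗ[R] N₁} {g₁ : N₁ →ₗ[R] N₂}
    {k₁ : N₁ →ₗ[R] N₀} {k₂ : N₂ →ₗ[R] N₁} (hgk : g₀ ∘ₗ k₁ + k₂ ∘ₗ g₁ = LinearMap.id)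
    {ω₁ : M₁ ⊗[R] N₂} {ω₂ : M₂ ⊗[R] N₁} (h : f₁.rTensor N₂ ω₁ = g₁.lTensor M₂ ω₂) :
    ∃ (η₁ : M₀ ⊗[R] N₂) (η₂ : M₁ ⊗[R] N₁) (η₃ : M₂ ⊗[R] N₀),
      ω₁ = f₀.rTensor N₂ η₁ + g₁.lTensor M₁ η₂ ∧
      ω₂ = f₁.rTensor N₁ η₂ + g₀.lTensor M₂ η₃ := by
  set η₂ := h₂.rTensor N₁ ω₂
  have hω₁ : ω₁ = f₀.rTensor N₂ (h₁.rTensor N₂ ω₁) + g₁.lTensor M₁ η₂ := by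
    rw [← LinearMap.rTensor_lTensor_comm, ← h]
    exact LinearMap.rTensor_homotopy_apply hfh ω₁
  set z := ω₂ - f₁.rTensor N₁ η₂
  -- `g₁ z = f₁ (ω₁ - g₁ η₂) = f₁ (f₀ (h₁ ω₁)) = 0`
  have hz : g₁.lTensor M₂ z = 0 := by
    rw [map_sub, ← h, ← LinearMap.rTensor_lTensor_comm, ← map_sub, ← eq_sub_of_add_eq hω₁.symm,
      ← LinearMap.rTensor_comp_apply, hf, LinearMap.rTensor_zero, LinearMap.zero_apply]
  refine ⟨h₁.rTensor N₂ ω₁, η₂, k₁.lTensor M₂ z, hω₁, ?_⟩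
  have hz' := LinearMap.lTensor_homotopy_apply hgk z
  rw [hz, map_zero, add_zero] at hz'
  rw [← hz', add_sub_cancel]

end TensorHomotopy

section InteriorMul

open CliffordAlgebra (contractLeft contractLeft_ι_mul contractLeft_algebraMap)

variable {R M : Type*} [CommRing R] [AddCommGroup M] [Module R M] (φ : Module.Dual R M)

lemma contractLeft_ι_mul_of_apply_eq_one {α : M} (hφ : φ α = 1) (x : ExteriorAlgebra R M) :
    contractLeft φ (ExteriorAlgebra.ι R α * x) = x - ExteriorAlgebra.ι R α * contractLeft φ x := by
  rw [contractLeft_ι_mul, hφ, one_smul]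

lemma contractLeft_eq_zero_of_mem_exteriorPower_zero {x : ExteriorAlgebra R M}
    (hx : x ∈ ⋀[R]^0 M) : contractLeft φ x = 0 := by
  rw [ExteriorAlgebra.exteriorPower, pow_zero, Submodule.mem_one] at hx
  obtain ⟨r, rfl⟩ := hx
  exact contractLeft_algebraMap 0 φ r

lemma contractLeft_mem_exteriorPower {n : ℕ} {x : ExteriorAlgebra R M} (hx : x ∈ ⋀[R]^n M) :
    contractLeft φ x ∈ ⋀[R]^(n - 1) M := by
  induction hx using Submodule.pow_induction_on_left' with
  | algebraMap r =>
    rw [contractLeft_algebraMap]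
    exact zero_mem _
  | add x y i _ _ hx hy =>
    rw [map_add]
    exact add_mem hx hy
  | mem_mul m hm i x hx ih =>
    obtain ⟨u, rfl⟩ := hm
    rw [contractLeft_ι_mul]
    refine sub_mem (Submodule.smul_mem _ _ hx) ?_
    cases i with
    | zero =>
      rw [contractLeft_eq_zero_of_mem_exteriorPower_zero φ hx, mul_zero]
      exact zero_mem _
    | succ j =>
      show _ ∈ LinearMap.range (ExteriorAlgebra.ι R) ^ (j + 1)
      rw [pow_succ']
      exact Submodule.mul_mem_mul (LinearMap.mem_range_self _ u) ih

noncomputable def interiorMul (n : ℕ) : ⋀[R]^n M →ₗ[R] ⋀[R]^(n - 1) M :=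
  (contractLeft φ).restrict fun _ hx => contractLeft_mem_exteriorPower φ hx

end InteriorMul

section WedgeHomotopy

open CliffordAlgebra (contractLeft)

/-- Wedging with `α` into degree `m`; by truncated subtraction its source in degree `0` is
`⋀^0`, and there it is zero. -/
noncomputable def LmulInto (α : U) : ∀ m : ℕ, ⋀[ℂ]^(m - 1) U →ₗ[ℂ] ⋀[ℂ]^m U
  | 0 => 0
  | k + 1 => Lmul α k

lemma Lmul_comp_LmulInto (α : U) (m : ℕ) : Lmul α m ∘ₗ LmulInto α m = 0 := by
  cases m with
  | zero => exact LinearMap.comp_zero _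
  | succ k => exact LinearMap.ext (Lmul_Lmul α k)

lemma LmulInto_comp_interiorMul_add {α : U} {φ : Module.Dual ℂ U} (hφ : φ α = 1) (m : ℕ) :
    LmulInto α m ∘ₗ interiorMul φ m
      + (interiorMul φ (m + 1) ∘ₗ Lmul α m : Module.End ℂ (⋀[ℂ]^m U)) = LinearMap.id := by
  refine LinearMap.ext fun ⟨x, hx⟩ => Subtype.ext ?_
  cases m with
  | zero =>
    show 0 + contractLeft φ (ExteriorAlgebra.ι ℂ α * x) = x
    rw [contractLeft_ι_mul_of_apply_eq_one φ hφ,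
      contractLeft_eq_zero_of_mem_exteriorPower_zero φ hx, mul_zero, sub_zero, zero_add]
  | succ k =>
    show ExteriorAlgebra.ι ℂ α * contractLeft φ x + contractLeft φ (ExteriorAlgebra.ι ℂ α * x) = x
    rw [contractLeft_ι_mul_of_apply_eq_one φ hφ, add_sub_cancel]

end WedgeHomotopy

section Transport

lemma BXcast_BXcast {r s r' s' r'' s'' : ℤ} (h₁ : r = r') (h₂ : s = s') (h₁' : r' = r'')
    (h₂' : s' = s'') (x : BX U W r s) :
    BXcast h₁' h₂' (BXcast h₁ h₂ x) = BXcast (h₁.trans h₁') (h₂.trans h₂') x := by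
  subst h₁ h₂ h₁' h₂'
  rfl

lemma Bd1_BXcast (α : U) {r r' : ℤ} (h : r = r') (s : ℤ) (x : BX U W r s) :
    Bd1 α r' s (BXcast h rfl x) = BXcast (congrArg (· + 1) h) rfl (Bd1 α r s x) := by
  subst h
  rfl

lemma Bd2u_BXcast (β : W) (r : ℤ) {s s' : ℤ} (h : s = s') (x : BX U W r s) :
    Bd2u β r s' (BXcast rfl h x) = BXcast rfl (congrArg (· + 1) h) (Bd2u β r s x) := by
  subst h
  rfl

lemma exists_Bd1_eq_rTensor_LmulInto (α : U) (m n : ℕ) (x : ⋀[ℂ]^(m - 1) U ⊗[ℂ] ⋀[ℂ]^n W) :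
    ∃ y : BX U W ((m : ℤ) - 1) n, BXcast (Int.sub_add_cancel _ 1) rfl (Bd1 α _ _ y) =
      (LmulInto α m).rTensor (⋀[ℂ]^n W) x := by
  cases m with
  | zero => exact ⟨PUnit.unit, by rw [LmulInto, LinearMap.rTensor_zero]; rfl⟩
  | succ k =>
    let x' : BX U W k n := x
    refine ⟨BXcast (by omega) rfl x', ?_⟩
    rw [Bd1_BXcast, BXcast_BXcast]
    rfl

lemma exists_Bd2u_eq_lTensor_LmulInto (β : W) (m n : ℕ) (x : ⋀[ℂ]^m U ⊗[ℂ] ⋀[ℂ]^(n - 1) W) :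
    ∃ y : BX U W m ((n : ℤ) - 1), BXcast rfl (Int.sub_add_cancel _ 1) (Bd2u β _ _ y) =
      (LmulInto β n).lTensor (⋀[ℂ]^m U) x := by
  cases n with
  | zero => exact ⟨PUnit.unit, by rw [LmulInto, LinearMap.lTensor_zero]; rfl⟩
  | succ k =>
    let x' : BX U W m k := x
    refine ⟨BXcast rfl (by omega) x', ?_⟩
    rw [Bd2u_BXcast, BXcast_BXcast]
    rfl

end Transport

/-- Exactness of the symbol complex of the Schweitzer complex in the degree just below
the Aeppli degree: if `ω₁ ∈ Λ^a U ⊗ Λ^{b+1} W` and `ω₂ ∈ Λ^{a+1} U ⊗ Λ^b W` satisfy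
`L_α ω₁ = L_β ω₂` (for `α, β` nonzero), then there are `η₁ ∈ Λ^{a-1} U ⊗ Λ^{b+1} W`,
`η₂ ∈ Λ^a U ⊗ Λ^b W` and `η₃ ∈ Λ^{a+1} U ⊗ Λ^{b-1} W` with `ω₁ = L_α η₁ + L_β η₂`
and `ω₂ = L_α η₂ + L_β η₃`. -/
theorem symbol_exact_below_aeppli (U W : Type) [AddCommGroup U] [Module ℂ U]
    [AddCommGroup W] [Module ℂ W]
    (α : U) (β : W) (hα : α ≠ 0) (hβ : β ≠ 0) (a b : ℤ) (ha : 0 ≤ a) (hb : 0 ≤ b)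
    (ω₁ : BX U W a (b + 1)) (ω₂ : BX U W (a + 1) b)
    (h : Bd1 α a (b + 1) ω₁ = Bd2u β (a + 1) b ω₂) :
    ∃ (η₁ : BX U W (a - 1) (b + 1)) (η₂ : BX U W a b) (η₃ : BX U W (a + 1) (b - 1)),
      ω₁ = BXcast (show a - 1 + 1 = a by omega) rfl (Bd1 α (a - 1) (b + 1) η₁)
            + Bd2u β a b η₂ ∧
      ω₂ = Bd1 α a b η₂
            + BXcast rfl (show b - 1 + 1 = b by omega) (Bd2u β (a + 1) (b - 1) η₃) := by
  obtain ⟨φ, hφ⟩ := Module.Projective.exists_dual_eq_one ℂ hα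
  obtain ⟨ψ, hψ⟩ := Module.Projective.exists_dual_eq_one ℂ hβ
  lift a to ℕ using ha
  lift b to ℕ using hb
  obtain ⟨η₁, η₂, η₃, hω₁, hω₂⟩ := exists_eq_rTensor_add_lTensor_of_homotopy
    (Lmul_comp_LmulInto α a) (LmulInto_comp_interiorMul_add hφ a)
    (LmulInto_comp_interiorMul_add hψ b) h
  obtain ⟨η₁', hη₁⟩ := exists_Bd1_eq_rTensor_LmulInto (W := W) α a (b + 1) η₁
  obtain ⟨η₃', hη₃⟩ := exists_Bd2u_eq_lTensor_LmulInto (U := U) β (a + 1) b η₃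
  exact ⟨η₁', η₂, η₃', hη₁ ▸ hω₁, hη₃ ▸ hω₂⟩
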